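/- arXiv:2111.05454 — 2 statements merged into one kernel-verified Lean document; each statement's English description precedes it below -/
import Mathlib

section
/- Let q and p be probability densities with q ≪ p, and draw x₁,…,x_K i.i.d. from p. Let π be the self-normalized importance sampling distribution with π_k ∝ q(x_k)/p(x_k). Then for any integer λ ≥ 1, E_{x_{1:K}∼p^K}[ E_{k'∼π}[p(x_{k'})/q(x_{k'})]^λ ] ≤ E_{x∼q}[(p(x)/q(x))^{λ+1}] = exp(λ · D_{λ+1}(p‖q)), where D denotes Rényi divergence. -/
open MeasureTheory
open scoped ENNReal NNReal

section Aux

variable {E : Type*} [MeasurableSpace E]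

lemma pi_map_eval_aux {K : ℕ} (μ : Measure E) [IsProbabilityMeasure μ] (k : Fin K) :
    (Measure.pi fun _ : Fin K => μ).map (fun xs => xs k) = μ := by
  refine Measure.ext fun s hs => ?_
  rw [Measure.map_apply (measurable_pi_apply k) hs]
  have hpre : (fun xs : Fin K → E => xs k) ⁻¹' s
      = Set.pi Set.univ (Function.update (fun _ => Set.univ) k s) :=
    Set.eval_preimage
  rw [hpre, Measure.pi_pi]
  rw [Finset.prod_eq_single k (fun i _ hik => by
      rw [Function.update_of_ne hik]; simp) (by simp)]
  rw [Function.update_self]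

end Aux

/-- Let `q ≪ p` be probability densities w.r.t. `ν`, let `x₁,…,x_K` be i.i.d. from `p`,
and let `π` be the self-normalized importance sampling distribution with
`π_k ∝ q(x_k)/p(x_k)`. For any integer `λ ≥ 1`,
`E_{x_{1:K}∼p^K}[ E_{k'∼π}[p(x_{k'})/q(x_{k'})]^λ ] ≤ E_{x∼q}[(p(x)/q(x))^{λ+1}]
  = exp(λ · D_{λ+1}(p‖q))`. -/
theorem importance_inverse_ratio_moment_bound {E : Type*} [MeasurableSpace E]
    (ν : Measure E) (p q : E → ℝ) (hp : ∀ x, 0 < p x) (hq : ∀ x, 0 < q x)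
    (hpmeas : Measurable p) (hqmeas : Measurable q)
    (hpd : IsProbabilityMeasure (ν.withDensity fun x => ENNReal.ofReal (p x)))
    (hqd : IsProbabilityMeasure (ν.withDensity fun x => ENNReal.ofReal (q x)))
    (K : ℕ) (hK : 0 < K) (lam : ℕ) (hlam : 1 ≤ lam)
    (I : ℝ) (hI : I = ∫ x, q x * (p x / q x) ^ (lam + 1) ∂ν) (hIfin : 0 < I)
    (hint : Integrable
      (fun xs : Fin K → E =>
        (∑ k', ((q (xs k') / p (xs k')) / ∑ j, q (xs j) / p (xs j)) *
          (p (xs k') / q (xs k'))) ^ lam)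
      (Measure.pi fun _ => ν.withDensity fun x => ENNReal.ofReal (p x))) :
    (∫ xs : Fin K → E,
        (∑ k', ((q (xs k') / p (xs k')) / ∑ j, q (xs j) / p (xs j)) *
          (p (xs k') / q (xs k'))) ^ lam
        ∂(Measure.pi fun _ => ν.withDensity fun x => ENNReal.ofReal (p x))) ≤ I ∧
      I = Real.exp (lam * ((1 / (lam : ℝ)) * Real.log I)) := by
  have hlamne : (lam : ℝ) ≠ 0 := by
    exact_mod_cast Nat.one_le_iff_ne_zero.mp hlam
  have hKne : (K : ℝ) ≠ 0 := by exact_mod_cast hK.ne'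
  have hK' : (0 : ℝ) < K := by exact_mod_cast hK
  haveI : Nonempty (Fin K) := ⟨⟨0, hK⟩⟩
  constructor
  · -- main inequality
    set P := ν.withDensity fun x => ENNReal.ofReal (p x) with hP
    have hpm : Measurable fun x => (p x).toNNReal := hpmeas.real_toNNReal
    have hqm : Measurable fun x => (q x).toNNReal := hqmeas.real_toNNReal
    have hzm : Measurable fun x => (p x / q x) ^ lam := (hpmeas.div hqmeas).pow_const lam
    -- pointwise density identity
    have hdens : ∀ x, (q x).toNNReal • (p x / q x) ^ (lam + 1)
        = (p x).toNNReal • (p x / q x) ^ lam := by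
      intro x
      have hqne := (hq x).ne'
      simp only [NNReal.smul_def, Real.coe_toNNReal _ (hq x).le,
        Real.coe_toNNReal _ (hp x).le, smul_eq_mul]
      rw [pow_succ]
      field_simp
    have hQeq : ∫ x, (p x / q x) ^ (lam + 1)
        ∂(ν.withDensity fun x => ENNReal.ofReal (q x)) = I := by
      rw [show (fun x => ENNReal.ofReal (q x)) = fun x => ((q x).toNNReal : ℝ≥0∞) from rfl,
        integral_withDensity_eq_integral_smul hqm, hI]
      congr 1
      funext x
      simp [NNReal.smul_def, Real.coe_toNNReal _ (hq x).le]
    have hQint : Integrable (fun x => (p x / q x) ^ (lam + 1))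
        (ν.withDensity fun x => ENNReal.ofReal (q x)) := by
      by_contra h
      rw [integral_undef h] at hQeq
      exact hIfin.ne' hQeq.symm
    have hνint : Integrable (fun x => (q x).toNNReal • (p x / q x) ^ (lam + 1)) ν := by
      have := (integrable_withDensity_iff_integrable_smul hqm).1 hQint
      exact this
    have hPint : Integrable (fun x => (p x / q x) ^ lam) P := by
      rw [hP, show (fun x => ENNReal.ofReal (p x)) = fun x => ((p x).toNNReal : ℝ≥0∞) from rfl,
        integrable_withDensity_iff_integrable_smul hpm]
      have hfun : (fun x => (p x).toNNReal • (p x / q x) ^ lam)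
          = fun x => (q x).toNNReal • (p x / q x) ^ (lam + 1) := funext fun x => (hdens x).symm
      rw [hfun]
      exact hνint
    have hPeq : ∫ x, (p x / q x) ^ lam ∂P = I := by
      rw [hP, show (fun x => ENNReal.ofReal (p x)) = fun x => ((p x).toNNReal : ℝ≥0∞) from rfl,
        integral_withDensity_eq_integral_smul hpm, ← hQeq,
        show (fun x => ENNReal.ofReal (q x)) = fun x => ((q x).toNNReal : ℝ≥0∞) from rfl,
        integral_withDensity_eq_integral_smul hqm]
      congr 1
      funext x
      exact (hdens x).symm
    -- per-coordinate facts
    have hmap : ∀ k : Fin K, (Measure.pi fun _ : Fin K => P).map (fun xs => xs k) = P :=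
      fun k => pi_map_eval_aux P k
    have hcomp_int : ∀ k : Fin K, Integrable
        (fun xs : Fin K → E => (p (xs k) / q (xs k)) ^ lam)
        (Measure.pi fun _ : Fin K => P) := by
      intro k
      have h1 : Integrable (fun x => (p x / q x) ^ lam)
          ((Measure.pi fun _ : Fin K => P).map (fun xs => xs k)) := by rw [hmap k]; exact hPint
      exact (integrable_map_measure hzm.aestronglyMeasurable
        (measurable_pi_apply k).aemeasurable).1 h1
    have hcomp_eq : ∀ k : Fin K,
        (∫ xs : Fin K → E, (p (xs k) / q (xs k)) ^ lam ∂(Measure.pi fun _ : Fin K => P)) = I := by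
      intro k
      have := integral_map (μ := Measure.pi fun _ : Fin K => P)
        (φ := fun xs => xs k) (measurable_pi_apply k).aemeasurable
        (f := fun x => (p x / q x) ^ lam) (by rw [hmap k]; exact hzm.aestronglyMeasurable)
      rw [← this, hmap k, hPeq]
    -- dominating function
    set G : (Fin K → E) → ℝ :=
      fun xs => (1 / (K : ℝ)) * ∑ k, (p (xs k) / q (xs k)) ^ lam with hG
    have hGint : Integrable G (Measure.pi fun _ : Fin K => P) :=
      (integrable_finset_sum Finset.univ fun k _ => hcomp_int k).const_mul _
    have hGeq : ∫ xs, G xs ∂(Measure.pi fun _ : Fin K => P) = I := by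
      rw [hG]
      simp only
      rw [integral_const_mul, integral_finset_sum Finset.univ fun k _ => hcomp_int k]
      simp only [hcomp_eq]
      rw [Finset.sum_const, Finset.card_univ, Fintype.card_fin, nsmul_eq_mul]
      field_simp
    -- pointwise bound
    have hpt : ∀ xs : Fin K → E,
        (∑ k', ((q (xs k') / p (xs k')) / ∑ j, q (xs j) / p (xs j)) *
          (p (xs k') / q (xs k'))) ^ lam ≤ G xs := by
      intro xs
      set w : Fin K → ℝ := fun k => q (xs k) / p (xs k) with hwdef
      set z : Fin K → ℝ := fun k => p (xs k) / q (xs k) with hzdef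
      have hw : ∀ k, 0 < w k := fun k => div_pos (hq _) (hp _)
      have hz : ∀ k, 0 < z k := fun k => div_pos (hp _) (hq _)
      have hS : 0 < ∑ j, w j := Finset.sum_pos (fun j _ => hw j) Finset.univ_nonempty
      set S := ∑ j, w j with hSdef
      have hsum : (∑ k', (w k' / S) * z k') = (K : ℝ) / S := by
        have hterm : ∀ k', (w k' / S) * z k' = 1 / S := by
          intro k'
          have h1 : w k' * z k' = 1 := by
            simp only [hwdef, hzdef]
            rw [div_mul_div_comm, mul_comm (q (xs k')) (p (xs k')),
              div_self (mul_pos (hp _) (hq _)).ne']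
          rw [div_mul_eq_mul_div, h1]
        rw [Finset.sum_congr rfl fun k' _ => hterm k', Finset.sum_const, Finset.card_univ,
          Fintype.card_fin, nsmul_eq_mul]
        ring
      have hcs : (K : ℝ) ^ 2 ≤ S * ∑ k, z k := by
        have := Finset.sum_sq_le_sum_mul_sum_of_sq_eq_mul Finset.univ
          (r := fun _ : Fin K => (1 : ℝ)) (f := w) (g := z)
          (fun i _ => (hw i).le) (fun i _ => (hz i).le)
          (fun i _ => by
            rw [one_pow]
            simp only [hwdef, hzdef]
            rw [div_mul_div_comm, mul_comm (q (xs i)) (p (xs i)),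
              div_self (mul_pos (hp _) (hq _)).ne'])
        simpa using this
      have h1 : (K : ℝ) / S ≤ (∑ k, z k) / K := by
        rw [div_le_div_iff₀ hS hK']
        nlinarith [hcs]
      have h2 : ((∑ k, z k) / (K : ℝ)) ^ lam ≤ (∑ k, (z k) ^ lam) / K := by
        obtain ⟨n, rfl⟩ : ∃ n, lam = n + 1 := ⟨lam - 1, (Nat.succ_pred_eq_of_pos hlam).symm⟩
        have hjen := pow_sum_div_card_le_sum_pow (s := Finset.univ) (f := z)
          (fun i _ => (hz i).le) n
        rw [Finset.card_univ, Fintype.card_fin] at hjen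
        have heq : ((∑ k, z k) / (K : ℝ)) ^ (n + 1)
            = ((∑ k, z k) ^ (n + 1) / (K : ℝ) ^ n) / K := by
          rw [div_pow, pow_succ]
          ring
        rw [heq]
        gcongr
      calc (∑ k', (w k' / S) * z k') ^ lam
          = ((K : ℝ) / S) ^ lam := by rw [hsum]
        _ ≤ ((∑ k, z k) / K) ^ lam :=
            pow_le_pow_left₀ (div_nonneg (by positivity) hS.le) h1 lam
        _ ≤ (∑ k, (z k) ^ lam) / K := h2
        _ = G xs := by
            show (∑ k, z k ^ lam) / (K : ℝ)
              = 1 / (K : ℝ) * ∑ k, (p (xs k) / q (xs k)) ^ lam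
            simp only [hzdef]
            ring
    calc (∫ xs : Fin K → E,
          (∑ k', ((q (xs k') / p (xs k')) / ∑ j, q (xs j) / p (xs j)) *
            (p (xs k') / q (xs k'))) ^ lam ∂(Measure.pi fun _ => P))
        ≤ ∫ xs, G xs ∂(Measure.pi fun _ : Fin K => P) := integral_mono hint hGint hpt
      _ = I := hGeq
  · have h1 : (lam : ℝ) * ((1 / (lam : ℝ)) * Real.log I) = Real.log I := by
      field_simp
    rw [h1, Real.exp_log hIfin]
end

section
/- For the subsampled Gaussian mechanism with q = N(μ, σ²I), p = N(0, σ²I), ‖μ‖₂ ≤ C, sampling rate α = B/N, and integer λ ≥ 2, the Rényi divergence of order λ of the mixture (1-α)p + αq from p satisfies D_λ((1-α)p + αq ‖ p) ≤ (1/(λ-1))·log E_{k∼Binomial(λ,α)}[exp((k²-k)C²/(2σ²))]. -/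
open MeasureTheory Real

/-- Isotropic Gaussian density on `ℝ^d` with mean `μ` and covariance `σ² I`. -/
noncomputable def gaussDensity {d : ℕ} (μ : EuclideanSpace ℝ (Fin d)) (σ : ℝ)
    (x : EuclideanSpace ℝ (Fin d)) : ℝ :=
  (2 * π * σ ^ 2) ^ (-(d : ℝ) / 2) * Real.exp (-‖x - μ‖ ^ 2 / (2 * σ ^ 2))

lemma gauss_pos {d : ℕ} (ν : EuclideanSpace ℝ (Fin d)) {σ : ℝ} (hσ : 0 < σ) (x) :
    0 < gaussDensity ν σ x := by
  unfold gaussDensity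
  positivity

lemma integrable_rexp_sqnorm {d : ℕ} {b : ℝ} (hb : 0 < b) :
    Integrable (fun v : EuclideanSpace ℝ (Fin d) ↦ rexp (-b * ‖v‖ ^ 2)) := by
  have h := (GaussianFourier.integrable_cexp_neg_mul_sq_norm_add
    (V := EuclideanSpace ℝ (Fin d)) (b := (b : ℂ)) (by simpa using hb) 0 0).re
  have hfun : (fun v : EuclideanSpace ℝ (Fin d) ↦ rexp (-b * ‖v‖ ^ 2)) =
      fun v : EuclideanSpace ℝ (Fin d) ↦ RCLike.re (Complex.exp (-(b : ℂ) * (‖v‖ : ℂ) ^ 2 +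
        0 * ((inner ℝ (0 : EuclideanSpace ℝ (Fin d)) v : ℝ) : ℂ))) := by
    funext v
    rw [show -(b : ℂ) * (‖v‖ : ℂ) ^ 2 + 0 * ((inner ℝ (0 : EuclideanSpace ℝ (Fin d)) v : ℝ) : ℂ)
      = ((-b * ‖v‖ ^ 2 : ℝ) : ℂ) by push_cast; ring, ← Complex.ofReal_exp]
    exact (RCLike.ofReal_re _).symm
  rw [hfun]
  exact h

lemma integrable_gauss {d : ℕ} (ν : EuclideanSpace ℝ (Fin d)) {σ : ℝ} (hσ : 0 < σ) :
    Integrable (gaussDensity ν σ) := by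
  unfold gaussDensity
  apply Integrable.const_mul
  have h : Integrable (fun v : EuclideanSpace ℝ (Fin d) ↦
      rexp (-(1 / (2 * σ ^ 2)) * ‖v‖ ^ 2)) := integrable_rexp_sqnorm (by positivity)
  have := h.comp_sub_right ν
  refine this.congr (Filter.Eventually.of_forall fun v ↦ ?_)
  ring_nf

lemma integral_gauss {d : ℕ} (ν : EuclideanSpace ℝ (Fin d)) {σ : ℝ} (hσ : 0 < σ) :
    ∫ x, gaussDensity ν σ x = 1 := by
  unfold gaussDensity
  rw [integral_const_mul]
  have h1 : ∀ x : EuclideanSpace ℝ (Fin d),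
      rexp (-‖x - ν‖ ^ 2 / (2 * σ ^ 2)) = rexp (-(1 / (2 * σ ^ 2)) * ‖x - ν‖ ^ 2) := by
    intro x; ring_nf
  simp_rw [h1]
  rw [integral_sub_right_eq_self (fun x : EuclideanSpace ℝ (Fin d) ↦
    rexp (-(1 / (2 * σ ^ 2)) * ‖x‖ ^ 2)) ν]
  rw [GaussianFourier.integral_rexp_neg_mul_sq_norm (by positivity)]
  have hd : (Module.finrank ℝ (EuclideanSpace ℝ (Fin d)) : ℝ) = d := by
    simp [finrank_euclideanSpace]
  rw [hd]
  have h2 : π / (1 / (2 * σ ^ 2)) = 2 * π * σ ^ 2 := by field_simp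
  rw [h2, ← Real.rpow_add (by positivity), neg_div, neg_add_cancel, Real.rpow_zero]

lemma gauss_pow {d : ℕ} (μ : EuclideanSpace ℝ (Fin d)) {σ : ℝ} (hσ : 0 < σ) (k : ℕ)
    (x : EuclideanSpace ℝ (Fin d)) :
    gaussDensity 0 σ x * (gaussDensity μ σ x / gaussDensity 0 σ x) ^ k =
      rexp (((k : ℝ) ^ 2 - k) * ‖μ‖ ^ 2 / (2 * σ ^ 2)) * gaussDensity ((k : ℝ) • μ) σ x := by
  unfold gaussDensity
  have hZ : (0 : ℝ) < (2 * π * σ ^ 2) ^ (-(d : ℝ) / 2) := by positivity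
  rw [mul_div_mul_left _ _ (ne_of_gt hZ), ← Real.exp_sub, ← Real.exp_nat_mul]
  have h1 : ‖x - μ‖ ^ 2 = ‖x‖ ^ 2 - 2 * (inner ℝ x μ : ℝ) + ‖μ‖ ^ 2 := norm_sub_sq_real x μ
  have h2 : ‖x - (k : ℝ) • μ‖ ^ 2 = ‖x‖ ^ 2 - 2 * ((k : ℝ) * (inner ℝ x μ : ℝ)) +
      (k : ℝ) ^ 2 * ‖μ‖ ^ 2 := by
    rw [norm_sub_sq_real, real_inner_smul_right, norm_smul]
    simp [mul_pow, sq_abs]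
  have h0 : ‖x - (0 : EuclideanSpace ℝ (Fin d))‖ = ‖x‖ := by rw [sub_zero]
  rw [h0]
  rw [show (2 * π * σ ^ 2) ^ (-(d : ℝ) / 2) * rexp (-‖x‖ ^ 2 / (2 * σ ^ 2)) *
    rexp (↑k * (-‖x - μ‖ ^ 2 / (2 * σ ^ 2) - -‖x‖ ^ 2 / (2 * σ ^ 2))) =
    (2 * π * σ ^ 2) ^ (-(d : ℝ) / 2) * rexp (-‖x‖ ^ 2 / (2 * σ ^ 2) +
      ↑k * (-‖x - μ‖ ^ 2 / (2 * σ ^ 2) - -‖x‖ ^ 2 / (2 * σ ^ 2))) by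
      rw [Real.exp_add]; ring]
  rw [show rexp ((↑k ^ 2 - ↑k) * ‖μ‖ ^ 2 / (2 * σ ^ 2)) * ((2 * π * σ ^ 2) ^ (-(d : ℝ) / 2) *
    rexp (-‖x - (k : ℝ) • μ‖ ^ 2 / (2 * σ ^ 2))) = (2 * π * σ ^ 2) ^ (-(d : ℝ) / 2) *
    rexp ((↑k ^ 2 - ↑k) * ‖μ‖ ^ 2 / (2 * σ ^ 2) + -‖x - (k : ℝ) • μ‖ ^ 2 / (2 * σ ^ 2)) by
      rw [Real.exp_add]; ring]
  congr 1
  rw [h1, h2]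
  have hs : (2 * σ ^ 2) ≠ 0 := by positivity
  field_simp
  ring

/-- Subsampled Gaussian mechanism: for `q = N(μ, σ²I)`, `p = N(0, σ²I)`, `‖μ‖ ≤ C`,
sampling rate `α = B/N` and integer `λ ≥ 2`,
`D_λ((1-α)p + αq ‖ p) ≤ (1/(λ-1))·log E_{k∼Bin(λ,α)}[exp((k²-k)C²/(2σ²))]`. -/
theorem subsampled_gaussian_renyi_bound {d : ℕ} (μ : EuclideanSpace ℝ (Fin d))
    (σ C : ℝ) (hσ : 0 < σ) (hC : 0 < C) (hμ : ‖μ‖ ≤ C)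
    (B N : ℕ) (hB : 0 < B) (hBN : B ≤ N) (α : ℝ) (hα : α = (B : ℝ) / N)
    (lam : ℕ) (hlam : 2 ≤ lam) :
    (1 / ((lam : ℝ) - 1)) *
        Real.log (∫ x, gaussDensity 0 σ x *
          (((1 - α) * gaussDensity 0 σ x + α * gaussDensity μ σ x) /
            gaussDensity 0 σ x) ^ lam) ≤
      (1 / ((lam : ℝ) - 1)) *
        Real.log (∑ k ∈ Finset.range (lam + 1),
          (lam.choose k : ℝ) * α ^ k * (1 - α) ^ (lam - k) *
            Real.exp (((k : ℝ) ^ 2 - k) * C ^ 2 / (2 * σ ^ 2))) := by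
  have hN : 0 < N := lt_of_lt_of_le hB hBN
  have hα0 : 0 < α := by
    rw [hα]; positivity
  have hα1 : α ≤ 1 := by
    rw [hα, div_le_one (by exact_mod_cast hN)]; exact_mod_cast hBN
  -- pointwise expansion
  have hpt : ∀ x, gaussDensity 0 σ x *
      (((1 - α) * gaussDensity 0 σ x + α * gaussDensity μ σ x) / gaussDensity 0 σ x) ^ lam =
      ∑ k ∈ Finset.range (lam + 1), ((lam.choose k : ℝ) * α ^ k * (1 - α) ^ (lam - k) *
        rexp (((k : ℝ) ^ 2 - k) * ‖μ‖ ^ 2 / (2 * σ ^ 2))) * gaussDensity ((k : ℝ) • μ) σ x := by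
    intro x
    have hp := gauss_pos (0 : EuclideanSpace ℝ (Fin d)) hσ x
    have hq : ((1 - α) * gaussDensity 0 σ x + α * gaussDensity μ σ x) / gaussDensity 0 σ x =
        α * (gaussDensity μ σ x / gaussDensity 0 σ x) + (1 - α) := by
      field_simp; ring
    rw [hq, add_pow, Finset.mul_sum]
    refine Finset.sum_congr rfl fun k hk ↦ ?_
    have := gauss_pow μ hσ k x
    rw [mul_pow]
    calc gaussDensity 0 σ x * (α ^ k * (gaussDensity μ σ x / gaussDensity 0 σ x) ^ k *
          (1 - α) ^ (lam - k) * ↑(lam.choose k))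
        = (α ^ k * (1 - α) ^ (lam - k) * ↑(lam.choose k)) *
          (gaussDensity 0 σ x * (gaussDensity μ σ x / gaussDensity 0 σ x) ^ k) := by ring
      _ = _ := by rw [this]; ring
  -- integrate
  have hint : (∫ x, gaussDensity 0 σ x *
      (((1 - α) * gaussDensity 0 σ x + α * gaussDensity μ σ x) / gaussDensity 0 σ x) ^ lam) =
      ∑ k ∈ Finset.range (lam + 1), (lam.choose k : ℝ) * α ^ k * (1 - α) ^ (lam - k) *
        rexp (((k : ℝ) ^ 2 - k) * ‖μ‖ ^ 2 / (2 * σ ^ 2)) := by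
    simp_rw [hpt]
    rw [MeasureTheory.integral_finset_sum (Finset.range (lam + 1))
      (f := fun k (x : EuclideanSpace ℝ (Fin d)) ↦ ((lam.choose k : ℝ) * α ^ k *
        (1 - α) ^ (lam - k) * rexp (((k : ℝ) ^ 2 - k) * ‖μ‖ ^ 2 / (2 * σ ^ 2))) *
        gaussDensity ((k : ℝ) • μ) σ x)
      (fun k _ ↦ (integrable_gauss ((k : ℝ) • μ) hσ).const_mul _)]
    refine Finset.sum_congr rfl fun k hk ↦ ?_
    rw [integral_const_mul, integral_gauss _ hσ, mul_one]
  rw [hint]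
  have hterm : ∀ k : ℕ, (0 : ℝ) ≤ (k : ℝ) ^ 2 - k := by
    intro k
    rcases Nat.eq_zero_or_pos k with h | h
    · simp [h]
    · have : (1 : ℝ) ≤ k := by exact_mod_cast h
      nlinarith
  have hS : ∀ k : ℕ, (lam.choose k : ℝ) * α ^ k * (1 - α) ^ (lam - k) *
      rexp (((k : ℝ) ^ 2 - k) * ‖μ‖ ^ 2 / (2 * σ ^ 2)) ≤
      (lam.choose k : ℝ) * α ^ k * (1 - α) ^ (lam - k) *
      rexp (((k : ℝ) ^ 2 - k) * C ^ 2 / (2 * σ ^ 2)) := by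
    intro k
    have h1α : (0 : ℝ) ≤ 1 - α := by linarith
    have hμ2 : ‖μ‖ ^ 2 ≤ C ^ 2 := by nlinarith [norm_nonneg μ]
    refine mul_le_mul_of_nonneg_left (Real.exp_le_exp.2 ?_)
      (mul_nonneg (by positivity) (pow_nonneg h1α _))
    exact (div_le_div_iff_of_pos_right (by positivity)).2
      (mul_le_mul_of_nonneg_left hμ2 (hterm k))
  have hpos : 0 < ∑ k ∈ Finset.range (lam + 1), (lam.choose k : ℝ) * α ^ k *
      (1 - α) ^ (lam - k) * rexp (((k : ℝ) ^ 2 - k) * ‖μ‖ ^ 2 / (2 * σ ^ 2)) := by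
    have h1α : (0 : ℝ) ≤ 1 - α := by linarith
    refine Finset.sum_pos' (fun k _ ↦ mul_nonneg (mul_nonneg (by positivity)
      (pow_nonneg h1α _)) (Real.exp_pos _).le) ⟨lam, Finset.self_mem_range_succ lam, ?_⟩
    simp only [Nat.choose_self, Nat.sub_self, pow_zero, Nat.cast_one, one_mul, mul_one]
    exact mul_pos (pow_pos hα0 lam) (Real.exp_pos _)
  have hle : ∑ k ∈ Finset.range (lam + 1), (lam.choose k : ℝ) * α ^ k *
      (1 - α) ^ (lam - k) * rexp (((k : ℝ) ^ 2 - k) * ‖μ‖ ^ 2 / (2 * σ ^ 2)) ≤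
      ∑ k ∈ Finset.range (lam + 1), (lam.choose k : ℝ) * α ^ k *
      (1 - α) ^ (lam - k) * rexp (((k : ℝ) ^ 2 - k) * C ^ 2 / (2 * σ ^ 2)) :=
    Finset.sum_le_sum fun k _ ↦ hS k
  have hcoef : (0 : ℝ) ≤ 1 / ((lam : ℝ) - 1) := by
    have : (2 : ℝ) ≤ lam := by exact_mod_cast hlam
    exact div_nonneg zero_le_one (by linarith)
  exact mul_le_mul_of_nonneg_left (Real.log_le_log hpos hle) hcoef
end
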